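/- Let $(a_\nu^2)$ be positive reals indexed by a strictly increasing sequence $\nu_1 < \nu_2 < \cdots$ of positive reals with $\sum_\nu a_\nu^2 < \infty$. Then $\lim_{n\to\infty} \left[ \nu_1^n \sum_\nu a_\nu^2 \nu^{-n} - a_{\nu_1}^2 \right]^{1/n} = \nu_1/\nu_2$. -/

import Mathlib

/-!
Writing `w i = ν 0 / ν i`, the bracket equals `∑_{i ≥ 1} a i * w i ^ n`. Since
`0 < w i ≤ w 1` for `i ≥ 1`, this tail lies between `a 1 * w 1 ^ n` and
`(∑_{i ≥ 1} a i) * w 1 ^ n`, and the `n`-th roots of both bounds tend to `w 1`.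
-/

open Filter Topology

lemma rpow_one_div_mul_pow {c r : ℝ} (hc : 0 ≤ c) (hr : 0 ≤ r) {n : ℕ} (hn : n ≠ 0) :
    (c * r ^ n) ^ ((1 : ℝ) / n) = c ^ ((1 : ℝ) / n) * r := by
  rw [Real.mul_rpow hc (by positivity), ← Real.rpow_natCast r n, ← Real.rpow_mul hr,
    mul_one_div_cancel (Nat.cast_ne_zero.mpr hn), Real.rpow_one]

lemma tendsto_rpow_one_div_mul_pow {c : ℝ} (hc : 0 < c) {r : ℝ} (hr : 0 ≤ r) :
    Tendsto (fun n : ℕ => (c * r ^ n) ^ ((1 : ℝ) / n)) atTop (𝓝 r) := by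
  have hroot : Tendsto (fun n : ℕ => c ^ ((1 : ℝ) / n) * r) atTop (𝓝 r) := by
    simpa using (tendsto_const_nhds.rpow tendsto_one_div_atTop_nhds_zero_nat
      (Or.inl hc.ne')).mul_const r
  refine hroot.congr' ?_
  filter_upwards [eventually_ne_atTop 0] with n hn
  exact (rpow_one_div_mul_pow hc.le hr hn).symm

lemma tendsto_rpow_one_div_of_le_of_le {s : ℕ → ℝ} {c₁ c₂ r : ℝ} (hc₁ : 0 < c₁)
    (hc₂ : 0 < c₂) (hr : 0 ≤ r) (hlow : ∀ n, c₁ * r ^ n ≤ s n)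
    (hup : ∀ n, s n ≤ c₂ * r ^ n) :
    Tendsto (fun n : ℕ => s n ^ ((1 : ℝ) / n)) atTop (𝓝 r) := by
  refine tendsto_of_tendsto_of_tendsto_of_le_of_le (tendsto_rpow_one_div_mul_pow hc₁ hr)
    (tendsto_rpow_one_div_mul_pow hc₂ hr) (fun n => ?_) (fun n => ?_)
  · exact Real.rpow_le_rpow (by positivity) (hlow n) (by positivity)
  · exact Real.rpow_le_rpow ((by positivity : 0 ≤ c₁ * r ^ n).trans (hlow n)) (hup n)
      (by positivity)

section WeightedSums

variable {a w : ℕ → ℝ} {r : ℝ}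

lemma summable_mul_pow_of_le (hsum : Summable a) (ha : ∀ i, 0 ≤ a i) (hw : ∀ i, 0 ≤ w i)
    (hwr : ∀ i, w i ≤ r) (n : ℕ) : Summable fun i => a i * w i ^ n :=
  (hsum.mul_right (r ^ n)).of_nonneg_of_le (fun i => mul_nonneg (ha i) (pow_nonneg (hw i) n))
    fun i => mul_le_mul_of_nonneg_left (pow_le_pow_left₀ (hw i) (hwr i) n) (ha i)

lemma tsum_mul_pow_le (hsum : Summable a) (ha : ∀ i, 0 ≤ a i) (hw : ∀ i, 0 ≤ w i)
    (hwr : ∀ i, w i ≤ r) (n : ℕ) : ∑' i, a i * w i ^ n ≤ (∑' i, a i) * r ^ n := by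
  rw [← tsum_mul_right]
  exact (summable_mul_pow_of_le hsum ha hw hwr n).tsum_le_tsum
    (fun i => mul_le_mul_of_nonneg_left (pow_le_pow_left₀ (hw i) (hwr i) n) (ha i))
    (hsum.mul_right _)

end WeightedSums

lemma mul_tsum_div_pow_sub_eq_tsum {ν a : ℕ → ℝ} (hν : Monotone ν) (hν₀ : 0 < ν 0)
    (hsum : Summable a) (ha : ∀ i, 0 ≤ a i) (n : ℕ) :
    ν 0 ^ n * (∑' i, a i / ν i ^ n) - a 0 = ∑' i, a (i + 1) * (ν 0 / ν (i + 1)) ^ n := by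
  have hw : ∀ i, 0 ≤ ν 0 / ν i := fun i =>
    div_nonneg hν₀.le (hν₀.trans_le (hν (Nat.zero_le i))).le
  have hw₁ : ∀ i, ν 0 / ν i ≤ 1 := fun i =>
    div_le_one_of_le₀ (hν (Nat.zero_le i)) (hν₀.le.trans (hν (Nat.zero_le i)))
  have hweighted : ν 0 ^ n * (∑' i, a i / ν i ^ n) = ∑' i, a i * (ν 0 / ν i) ^ n := by
    rw [← tsum_mul_left]
    exact tsum_congr fun i => by rw [div_pow, mul_div_left_comm]
  rw [hweighted, (summable_mul_pow_of_le hsum ha hw hw₁ n).tsum_eq_zero_add, div_self hν₀.ne',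
    one_pow, mul_one, add_sub_cancel_left]

theorem stmt2_general (ν a : ℕ → ℝ) (hν : StrictMono ν) (hνpos : ∀ i, 0 < ν i)
    (hapos : ∀ i, 0 < a i) (hsum : Summable a) :
    Tendsto (fun n : ℕ => (ν 0 ^ n * (∑' i, a i / ν i ^ n) - a 0) ^ ((1 : ℝ) / n))
      atTop (nhds (ν 0 / ν 1)) := by
  have ha : ∀ i, 0 ≤ a i := fun i => (hapos i).le
  have htail : Summable fun i => a (i + 1) := hsum.comp_injective (add_left_injective 1)
  have hw : ∀ i, 0 ≤ ν 0 / ν (i + 1) := fun i => div_nonneg (hνpos 0).le (hνpos _).le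
  have hw₁ : ∀ i, ν 0 / ν (i + 1) ≤ ν 0 / ν 1 := fun i =>
    div_le_div_of_nonneg_left (hνpos 0).le (hνpos 1) (hν.monotone (Nat.le_add_left 1 i))
  simp_rw [mul_tsum_div_pow_sub_eq_tsum hν.monotone (hνpos 0) hsum ha]
  refine tendsto_rpow_one_div_of_le_of_le (hapos 1) (htail.tsum_pos (fun _ => ha _) 0 (hapos 1))
    (hw 0) (fun n => ?_) (tsum_mul_pow_le htail (fun _ => ha _) hw hw₁)
  exact (summable_mul_pow_of_le htail (fun _ => ha _) hw hw₁ n).le_tsum 0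
    fun i _ => mul_nonneg (ha _) (pow_nonneg (hw i) n)

/-- After subtracting the leading term, the root test recovers the ratio of the
first two frequencies. -/
theorem stmt2 (ν a : ℕ → ℝ) (hν : StrictMono ν) (hνpos : ∀ i, 0 < ν i)
    (hapos : ∀ i, 0 < a i) (hsum : Summable a)
    (hsummable : ∀ n : ℕ, 1 ≤ n → Summable fun i => a i / ν i ^ n) :
    Tendsto (fun n : ℕ => (ν 0 ^ n * (∑' i, a i / ν i ^ n) - a 0) ^ ((1 : ℝ) / n))
      atTop (nhds (ν 0 / ν 1)) :=
  stmt2_general ν a hν hνpos hapos hsum
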